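/- Let x ∈ 𝒳. If there exists a nonempty proper subset of Supp(x) that is isolated in the tangent digraph 𝒟_x, then x is not an extremal in 𝒳'. -/

import Mathlib

open scoped Classical

noncomputable section

/-- Max-plus matrix-vector product: `(A ⊗ x) i = max_j (A i j + x j)`. -/
def mpApply {n : ℕ} (A : Matrix (Fin n) (Fin n) (WithBot ℝ)) (x : Fin n → WithBot ℝ)
    (i : Fin n) : WithBot ℝ :=
  Finset.univ.sup fun j => A i j + x j

/-- The solution set `𝒳` of `A ⊗ x ≥ x`, `x ≠ -∞`. -/
def SuperEig {n : ℕ} (A : Matrix (Fin n) (Fin n) (WithBot ℝ)) : Set (Fin n → WithBot ℝ) :=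
  {x | (∀ i, x i ≤ mpApply A x i) ∧ x ≠ fun _ => (⊥ : WithBot ℝ)}

/-- `𝒳' = 𝒳 ∪ {-∞}`. -/
def SuperEig' {n : ℕ} (A : Matrix (Fin n) (Fin n) (WithBot ℝ)) : Set (Fin n → WithBot ℝ) :=
  SuperEig A ∪ {fun _ => (⊥ : WithBot ℝ)}

/-- Support of a vector. -/
def Supp {n : ℕ} (x : Fin n → WithBot ℝ) : Set (Fin n) := {i | x i ≠ ⊥}

/-- `v` is an extremal in `𝒳'`. -/
def IsExtremal {n : ℕ} (A : Matrix (Fin n) (Fin n) (WithBot ℝ)) (v : Fin n → WithBot ℝ) :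
    Prop :=
  v ∈ SuperEig' A ∧
    ∀ y ∈ SuperEig' A, ∀ z ∈ SuperEig' A, v = (fun i => y i ⊔ z i) → v = y ∨ v = z

/-- `Arc A x a b` : there is an arc from `a` to `b` in the tangent digraph `𝒟ₓ`, i.e.,
`a, b ∈ Supp x`, `A b a + x a = x b` and `A b k + x k ≤ x b` for all `k`. -/
def Arc {n : ℕ} (A : Matrix (Fin n) (Fin n) (WithBot ℝ)) (x : Fin n → WithBot ℝ)
    (a b : Fin n) : Prop :=
  x a ≠ ⊥ ∧ x b ≠ ⊥ ∧ A b a + x a = x b ∧ ∀ k, A b k + x k ≤ x b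

/-- `i` is a I-variable node: no outgoing arc other than possibly the loop `(i,i)`. -/
def IVar {n : ℕ} (A : Matrix (Fin n) (Fin n) (WithBot ℝ)) (x : Fin n → WithBot ℝ)
    (i : Fin n) : Prop :=
  x i ≠ ⊥ ∧ ∀ j, Arc A x i j → j = i

/-- `i` is a II-variable node: the endnode of any outgoing arc from `i` except the loop
has another incoming arc. -/
def IIVar {n : ℕ} (A : Matrix (Fin n) (Fin n) (WithBot ℝ)) (x : Fin n → WithBot ℝ)
    (i : Fin n) : Prop :=
  x i ≠ ⊥ ∧ ∀ j, j ≠ i → Arc A x i j → ∃ k, k ≠ i ∧ Arc A x k j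

/-- `i` is a variable node: I-variable or II-variable. -/
def VarNode {n : ℕ} (A : Matrix (Fin n) (Fin n) (WithBot ℝ)) (x : Fin n → WithBot ℝ)
    (i : Fin n) : Prop :=
  IVar A x i ∨ IIVar A x i

/-- `i` is an invariable node: some outgoing arc `(i,j)` with `j ≠ i` is the only incoming
arc of `j`. -/
def Invariable {n : ℕ} (A : Matrix (Fin n) (Fin n) (WithBot ℝ)) (x : Fin n → WithBot ℝ)
    (i : Fin n) : Prop :=
  x i ≠ ⊥ ∧ ∃ j, j ≠ i ∧ Arc A x i j ∧ ∀ k, Arc A x k j → k = i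

/-- `W` is an isolated node set in `𝒟ₓ`: `W ⊆ Supp x` and no arc joins `W` and its
complement in either direction. -/
def IsolatedSet {n : ℕ} (A : Matrix (Fin n) (Fin n) (WithBot ℝ)) (x : Fin n → WithBot ℝ)
    (W : Set (Fin n)) : Prop :=
  W ⊆ Supp x ∧ ∀ a b, Arc A x a b → (a ∈ W ↔ b ∈ W)

/-- `𝒳^{≤ x}`: solutions below `x` and different from `x`. -/
def BelowSet {n : ℕ} (A : Matrix (Fin n) (Fin n) (WithBot ℝ)) (x : Fin n → WithBot ℝ) :
    Set (Fin n → WithBot ℝ) :=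
  {y ∈ SuperEig A | y ≤ x ∧ y ≠ x}

/-- A cycle of length `k ≥ 1` in the tangent digraph `𝒟ₓ`, given by the nodes
`c 0, c 1, …, c (k-1), c 0`. Its node set is `c '' Set.Iio k`. -/
def IsCycle {n : ℕ} (A : Matrix (Fin n) (Fin n) (WithBot ℝ)) (x : Fin n → WithBot ℝ)
    (k : ℕ) (c : ℕ → Fin n) : Prop :=
  1 ≤ k ∧ ∀ t < k, Arc A x (c t) (c ((t + 1) % k))

/-!
Choose `ε > 0` below every positive slack `(A ⊗ x)ᵢ - xᵢ`. Lowering `x` by at most `ε`, by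
amounts that are constant along the arcs of `𝒟ₓ`, keeps `A ⊗ x ≥ x`: a tight row stays tight
through its arc, and a slack row has room `ε`. For an isolated `W`, lowering `x` by `ε` off `W`
and, separately, on `W` gives two solutions different from `x` whose maximum is `x`.
-/

open Filter Topology

lemma WithBot.eventually_add_coe_le_of_lt {a b : WithBot ℝ} (h : a < b) :
    ∀ᶠ ε : ℝ in 𝓝 0, a + ε ≤ b := by
  induction a with
  | bot => exact Eventually.of_forall fun ε => by simp
  | coe a =>
    lift b to ℝ using h.ne_bot
    have hab : 0 < b - a := sub_pos.2 (WithBot.coe_lt_coe.1 h)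
    filter_upwards [eventually_lt_nhds hab] with ε hε
    exact_mod_cast (by linarith : a + ε ≤ b)

lemma WithBot.exists_pos_forall_add_coe_le_of_lt {ι : Type*} [Finite ι]
    (f g : ι → WithBot ℝ) : ∃ ε : ℝ, 0 < ε ∧ ∀ i, f i < g i → f i + ε ≤ g i := by
  have h : ∀ᶠ ε : ℝ in 𝓝[>] 0, ∀ i, f i < g i → f i + ε ≤ g i := by
    refine eventually_all.2 fun i => ?_
    by_cases hi : f i < g i
    · exact ((eventually_add_coe_le_of_lt hi).filter_mono nhdsWithin_le_nhds).mono fun _ h _ => h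
    · exact Eventually.of_forall fun _ h => absurd h hi
  exact (h.and self_mem_nhdsWithin).exists.imp fun _ h => ⟨h.2, h.1⟩

section MpApply

variable {n : ℕ} (A : Matrix (Fin n) (Fin n) (WithBot ℝ)) (x : Fin n → WithBot ℝ)

lemma le_mpApply (i j : Fin n) : A i j + x j ≤ mpApply A x i :=
  Finset.le_sup (f := fun j => A i j + x j) (Finset.mem_univ j)

lemma exists_mpApply_eq (i : Fin n) : ∃ j, mpApply A x i = A i j + x j :=
  let ⟨j, _, hj⟩ := Finset.exists_mem_eq_sup _ ⟨i, Finset.mem_univ i⟩ fun j => A i j + x j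
  ⟨j, hj⟩

variable {A x}

lemma arc_of_eq_mpApply {i j : Fin n} (hi : x i ≠ ⊥) (hj : mpApply A x i = A i j + x j)
    (htight : x i = mpApply A x i) : Arc A x j i := by
  refine ⟨fun hxj => hi ?_, hi, (htight.trans hj).symm, fun k => htight ▸ le_mpApply A x i k⟩
  rw [htight, hj, hxj, WithBot.add_bot]

lemma add_coe_le_mpApply_add_coe (hx : ∀ i, x i ≤ mpApply A x i) {ε : ℝ}
    (hslack : ∀ i, x i < mpApply A x i → x i + ε ≤ mpApply A x i) {d : Fin n → ℝ}
    (hd_nonpos : ∀ i, d i ≤ 0) (hd_ge : ∀ i, -ε ≤ d i) (hd_arc : ∀ a b, Arc A x a b → d a = d b)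
    (i : Fin n) : x i + d i ≤ mpApply A (fun j => x j + d j) i := by
  obtain ⟨j, hj⟩ := exists_mpApply_eq A x i
  refine le_trans ?_ (le_mpApply A _ i j)
  rw [← add_assoc]
  rcases (hx i).lt_or_eq with hlt | htight
  · calc x i + d i ≤ x i + ε + ↑(-ε) := by
          rw [add_assoc, ← WithBot.coe_add, add_neg_cancel]
          gcongr
          exact_mod_cast hd_nonpos i
      _ ≤ A i j + x j + d j := by
          refine add_le_add ?_ (WithBot.coe_le_coe.2 (hd_ge j))
          exact hj ▸ hslack i hlt
  · by_cases hi : x i = ⊥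
    · simp [hi]
    · rw [hd_arc j i (arc_of_eq_mpApply hi hj htight), htight, hj]

end MpApply

def lowerOutside {n : ℕ} (x : Fin n → WithBot ℝ) (V : Set (Fin n)) (ε : ℝ) :
    Fin n → WithBot ℝ :=
  fun i => x i + ((if i ∈ V then 0 else -ε : ℝ) : WithBot ℝ)

section LowerOutside

variable {n : ℕ} {x : Fin n → WithBot ℝ} {V : Set (Fin n)} {ε : ℝ}

lemma lowerOutside_of_mem {i : Fin n} (hi : i ∈ V) : lowerOutside x V ε i = x i := by
  simp [lowerOutside, hi]

lemma lowerOutside_le (hε : 0 ≤ ε) : lowerOutside x V ε ≤ x := fun i => by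
  by_cases hi : i ∈ V
  · exact (lowerOutside_of_mem hi).le
  · simpa [lowerOutside, hi] using add_le_add_right (WithBot.coe_le_coe.2 (neg_nonpos.2 hε)) (x i)

lemma lowerOutside_ne (hε : 0 < ε) {i : Fin n} (hxi : x i ≠ ⊥) (hi : i ∉ V) :
    lowerOutside x V ε ≠ x := fun h => by
  lift x i to ℝ using hxi with a ha
  have := congrFun h i
  simp only [lowerOutside, hi, if_false, ← ha, ← WithBot.coe_add, WithBot.coe_inj] at this
  linarith

lemma lowerOutside_sup_lowerOutside_compl (hε : 0 ≤ ε) :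
    lowerOutside x V ε ⊔ lowerOutside x Vᶜ ε = x := funext fun i => by
  by_cases hi : i ∈ V
  · exact (congrArg (· ⊔ _) (lowerOutside_of_mem hi)).trans (sup_eq_left.2 (lowerOutside_le hε i))
  · exact (congrArg (_ ⊔ ·) (lowerOutside_of_mem (Set.mem_compl hi))).trans
      (sup_eq_right.2 (lowerOutside_le hε i))

lemma lowerOutside_mem_superEig {A : Matrix (Fin n) (Fin n) (WithBot ℝ)}
    (hx : ∀ i, x i ≤ mpApply A x i) (hε : 0 ≤ ε)
    (hslack : ∀ i, x i < mpApply A x i → x i + ε ≤ mpApply A x i)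
    (hV : ∀ a b, Arc A x a b → (a ∈ V ↔ b ∈ V)) (hsupp : ∃ i ∈ V, x i ≠ ⊥) :
    lowerOutside x V ε ∈ SuperEig A := by
  refine ⟨add_coe_le_mpApply_add_coe hx hslack (fun i => ?_) (fun i => ?_) fun a b hab => ?_, ?_⟩
  · split_ifs <;> linarith
  · split_ifs <;> linarith
  · simp only [hV a b hab]
  · obtain ⟨i, hiV, hxi⟩ := hsupp
    exact fun h => hxi ((lowerOutside_of_mem hiV).symm.trans (congrFun h i))

end LowerOutside

/-- a nonempty proper isolated subset of `Supp x` implies `x` is not an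
extremal in `𝒳'`. -/
theorem stmt7 {n : ℕ} (A : Matrix (Fin n) (Fin n) (WithBot ℝ)) (x : Fin n → WithBot ℝ)
    (hx : x ∈ SuperEig A) (W : Set (Fin n)) (hne : W.Nonempty) (hss : W ⊂ Supp x)
    (hiso : IsolatedSet A x W) : ¬ IsExtremal A x := by
  obtain ⟨ε, hε, hslack⟩ := WithBot.exists_pos_forall_add_coe_le_of_lt x (mpApply A x)
  obtain ⟨p, hpS, hpW⟩ := Set.exists_of_ssubset hss
  obtain ⟨q, hqW⟩ := hne
  have hqS : x q ≠ ⊥ := hss.subset hqW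
  have hW := lowerOutside_mem_superEig hx.1 hε.le hslack hiso.2 ⟨q, hqW, hqS⟩
  have hWc := lowerOutside_mem_superEig hx.1 hε.le hslack
    (fun a b hab => not_congr (hiso.2 a b hab)) ⟨p, hpW, hpS⟩
  rintro ⟨-, hext⟩
  rcases hext _ (Or.inl hW) _ (Or.inl hWc) (lowerOutside_sup_lowerOutside_compl hε.le).symm
    with h | h
  · exact lowerOutside_ne hε hpS hpW h.symm
  · exact lowerOutside_ne hε hqS (not_not_intro hqW) h.symm
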